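/- arXiv:1902.03694 — 2 statements merged into one kernel-verified Lean document; each statement's English description precedes it below -/
import Mathlib

section
/- Let 0 < μ ≤ L, let f be μ-strongly convex with L-Lipschitz gradient on ℝⁿ, with minimizer x⋆, and let 0 < s ≤ 1/L. Then the iterates of the implicit Euler scheme for the low-resolution strongly convex ODE satisfy, for every k ≥ 0, f(x_k) − f(x⋆) ≤ 3L‖x₀ − x⋆‖² / (2(1 + √(μs)/4)^k). -/
/-!
The function `E(x, v) = f x - f x⋆ + ‖v‖²/4 + ‖v + 2√μ (x - x⋆)‖²/4` is a Lyapunov function of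
the scheme: strong convexity at `x_{k+1}`, once towards `x_k` and once towards `x⋆`, shows that one
implicit step divides it by at least `1 + √(μs)/4`. Since `v₀ = 0`, `∇f(x⋆) = 0` and `∇f` is
`L`-Lipschitz, `E(x₀, v₀) = f x₀ - f x⋆ + μ‖x₀ - x⋆‖² ≤ (L + μ/2)‖x₀ - x⋆‖² ≤ 3L‖x₀ - x⋆‖²/2`,
and `f x_k - f x⋆ ≤ E(x_k, v_k)`.
-/

open scoped RealInnerProductSpace

section

variable {E : Type*} [NormedAddCommGroup E] [InnerProductSpace ℝ E]

theorem HasGradientAt.eq_zero_of_forall_le [CompleteSpace E] {f : E → ℝ} {g a : E}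
    (hf : HasGradientAt f g a) (hmin : ∀ z, f a ≤ f z) : g = 0 := by
  have hloc : IsLocalMin f a := Filter.Eventually.of_forall hmin
  simpa using hloc.hasFDerivAt_eq_zero (hasGradientAt_iff_hasFDerivAt.mp hf)

theorem norm_add_sq_le_two_mul (x y : E) : ‖x + y‖ ^ 2 ≤ 2 * ‖x‖ ^ 2 + 2 * ‖y‖ ^ 2 := by
  linarith [parallelogram_law_with_norm ℝ x y, sq_nonneg ‖x - y‖]

theorem norm_smul_add_smul_sq (a b : ℝ) (x y : E) :
    ‖a • x + b • y‖ ^ 2 = a ^ 2 * ‖x‖ ^ 2 + 2 * a * b * ⟪x, y⟫ + b ^ 2 * ‖y‖ ^ 2 := by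
  simp only [norm_add_sq_real, real_inner_smul_left, real_inner_smul_right, norm_smul,
    Real.norm_eq_abs, mul_pow, sq_abs]
  ring

theorem sub_le_of_strongConvex_of_lipschitz_gradient {f : E → ℝ} {f' : E → E} {μ L : ℝ}
    (hsc : ∀ z w, f w ≥ f z + ⟪f' z, w - z⟫ + μ / 2 * ‖w - z‖ ^ 2)
    (hLip : ∀ z w, ‖f' z - f' w‖ ≤ L * ‖z - w‖) {xstar : E} (hstar : f' xstar = 0) (x : E) :
    f x - f xstar ≤ (L - μ / 2) * ‖x - xstar‖ ^ 2 := by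
  have hconv := hsc x xstar
  have hgrad : ‖f' x‖ ≤ L * ‖x - xstar‖ := by simpa [hstar] using hLip x xstar
  have hcs : ⟪f' x, x - xstar⟫ ≤ ‖f' x‖ * ‖x - xstar‖ := real_inner_le_norm _ _
  rw [← neg_sub x xstar, inner_neg_right, norm_neg] at hconv
  nlinarith [mul_le_mul_of_nonneg_right hgrad (norm_nonneg (x - xstar))]

variable (f : E → ℝ) (μ : ℝ) (xstar : E)

noncomputable def lyapunov (x v : E) : ℝ :=
  f x - f xstar + ‖v‖ ^ 2 / 4 + ‖v + (2 * √μ) • (x - xstar)‖ ^ 2 / 4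

variable {f μ xstar}

theorem sub_le_lyapunov (x v : E) : f x - f xstar ≤ lyapunov f μ xstar x v := by
  unfold lyapunov
  linarith [sq_nonneg ‖v‖, sq_nonneg ‖v + (2 * √μ) • (x - xstar)‖]

theorem lyapunov_zero_right (hμ : 0 ≤ μ) (x : E) :
    lyapunov f μ xstar x 0 = f x - f xstar + μ * ‖x - xstar‖ ^ 2 := by
  rw [lyapunov, zero_add, norm_zero, norm_smul, Real.norm_eq_abs, mul_pow, sq_abs, mul_pow,
    Real.sq_sqrt hμ]
  ring

theorem lyapunov_implicitEuler_step {f' : E → E} (hμ : 0 ≤ μ)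
    (hsc : ∀ z w, f w ≥ f z + ⟪f' z, w - z⟫ + μ / 2 * ‖w - z‖ ^ 2) (hmin : ∀ z, f xstar ≤ f z)
    {s : ℝ} {x₀ v₀ x₁ v₁ : E} (hx : x₁ - x₀ = √s • v₁)
    (hv : v₁ - v₀ = -((2 * √(μ * s)) • v₁) - √s • f' x₁) :
    (1 + √(μ * s) / 4) * lyapunov f μ xstar x₁ v₁ ≤ lyapunov f μ xstar x₀ v₀ := by
  rw [Real.sqrt_mul hμ] at hv ⊢
  set σ := √s
  set m := √μ
  set g := f' x₁
  obtain rfl : x₀ = x₁ - σ • v₁ := by rw [← hx]; abel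
  obtain rfl : v₀ = (1 + 2 * (m * σ)) • v₁ + σ • g := by
    rw [← sub_sub_cancel v₁ v₀, hv]; module
  have hw : (1 + 2 * (m * σ)) • v₁ + σ • g + (2 * m) • (x₁ - σ • v₁ - xstar)
      = (v₁ + (2 * m) • (x₁ - xstar)) + σ • g := by module
  set w := v₁ + (2 * m) • (x₁ - xstar)
  have ha : 0 ≤ m * σ := by positivity
  have hm : m ^ 2 = μ := Real.sq_sqrt hμ
  have hw₀ : ‖w + σ • g‖ ^ 2
      = ‖w‖ ^ 2 + 2 * σ * ⟪v₁, g⟫ + 4 * (m * σ) * ⟪x₁ - xstar, g⟫ + σ ^ 2 * ‖g‖ ^ 2 := by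
    simp only [norm_add_sq_real, inner_add_left, real_inner_smul_left, real_inner_smul_right,
      norm_smul, Real.norm_eq_abs, mul_pow, sq_abs, w]
    ring
  have hdescent : f (x₁ - σ • v₁) ≥ f x₁ - σ * ⟪v₁, g⟫ + (m * σ) ^ 2 / 2 * ‖v₁‖ ^ 2 := by
    have := hsc x₁ (x₁ - σ • v₁)
    rw [sub_sub_cancel_left, inner_neg_right, norm_neg, norm_smul, inner_smul_right,
      real_inner_comm, Real.norm_eq_abs, mul_pow, sq_abs, ← hm] at this
    linarith
  have hoptimal : ⟪x₁ - xstar, g⟫ ≥ f x₁ - f xstar + μ / 2 * ‖x₁ - xstar‖ ^ 2 := by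
    have := hsc x₁ xstar
    rw [← neg_sub, inner_neg_right, norm_neg, real_inner_comm] at this
    linarith
  have hw_le : ‖w‖ ^ 2 ≤ 2 * ‖v₁‖ ^ 2 + 8 * μ * ‖x₁ - xstar‖ ^ 2 := by
    have := norm_add_sq_le_two_mul v₁ ((2 * m) • (x₁ - xstar))
    rw [norm_smul, Real.norm_eq_abs, mul_pow, sq_abs, mul_pow, hm] at this
    linarith
  -- the cross term `m σ² ⟪v₁, g⟫` is absorbed by completing the square
  have hsq : 0 ≤ σ ^ 2 * ‖g‖ ^ 2 + 2 * σ * (m * σ) * ⟪v₁, g⟫ + (m * σ) ^ 2 * ‖v₁‖ ^ 2 := by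
    rw [real_inner_comm, ← norm_smul_add_smul_sq]; positivity
  unfold lyapunov
  rw [hw, norm_smul_add_smul_sq, hw₀]
  linarith [mul_le_mul_of_nonneg_left hw_le ha, mul_le_mul_of_nonneg_left hoptimal.le ha,
    mul_nonneg ha (sub_nonneg.mpr (hmin x₁)), mul_nonneg ha (sq_nonneg ‖v₁‖),
    mul_nonneg (sq_nonneg (m * σ)) (sq_nonneg ‖v₁‖)]

end

theorem stmt17_general
    {n : ℕ} (μ L : ℝ) (hμ : 0 < μ) (hμL : μ ≤ L)
    (f : EuclideanSpace ℝ (Fin n) → ℝ)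
    (f' : EuclideanSpace ℝ (Fin n) → EuclideanSpace ℝ (Fin n))
    (hgrad : ∀ z, HasGradientAt f (f' z) z)
    (hLip : ∀ z w, ‖f' z - f' w‖ ≤ L * ‖z - w‖)
    (hsc : ∀ z w, f w ≥ f z + ⟪f' z, w - z⟫ + μ / 2 * ‖w - z‖ ^ 2)
    (xstar : EuclideanSpace ℝ (Fin n)) (hmin : ∀ z, f xstar ≤ f z)
    (s : ℝ)
    (x v : ℕ → EuclideanSpace ℝ (Fin n))
    (hv0 : v 0 = 0)
    (hx : ∀ k : ℕ, x (k + 1) - x k = Real.sqrt s • v (k + 1))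
    (hv : ∀ k : ℕ, v (k + 1) - v k = -((2 * Real.sqrt (μ * s)) • v (k + 1))
      - Real.sqrt s • f' (x (k + 1)))
    : ∀ k : ℕ, f (x k) - f xstar ≤ 3 * L * ‖x 0 - xstar‖ ^ 2 / (2 * (1 + Real.sqrt (μ * s) / 4) ^ k) := by
  intro k
  set r := 1 + √(μ * s) / 4
  have hr : 0 < r := by positivity
  have hdecay : lyapunov f μ xstar (x k) (v k) ≤ r⁻¹ ^ k * lyapunov f μ xstar (x 0) (v 0) :=
    le_geom (u := fun j ↦ lyapunov f μ xstar (x j) (v j)) (by positivity) k fun j _ => by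
      rw [le_inv_mul_iff₀ hr]
      exact lyapunov_implicitEuler_step hμ.le hsc hmin (hx j) (hv j)
  have hinit : lyapunov f μ xstar (x 0) (v 0) ≤ 3 * L / 2 * ‖x 0 - xstar‖ ^ 2 := by
    have hstar := (hgrad xstar).eq_zero_of_forall_le hmin
    rw [hv0, lyapunov_zero_right hμ.le]
    linarith [sub_le_of_strongConvex_of_lipschitz_gradient hsc hLip hstar (x 0),
      mul_le_mul_of_nonneg_right hμL (sq_nonneg ‖x 0 - xstar‖)]
  calc f (x k) - f xstar ≤ lyapunov f μ xstar (x k) (v k) := sub_le_lyapunov _ _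
    _ ≤ r⁻¹ ^ k * (3 * L / 2 * ‖x 0 - xstar‖ ^ 2) := hdecay.trans (by gcongr)
    _ = 3 * L * ‖x 0 - xstar‖ ^ 2 / (2 * r ^ k) := by rw [inv_pow]; field_simp

theorem stmt17
    {n : ℕ} (μ L : ℝ) (hμ : 0 < μ) (hμL : μ ≤ L)
    (f : EuclideanSpace ℝ (Fin n) → ℝ)
    (f' : EuclideanSpace ℝ (Fin n) → EuclideanSpace ℝ (Fin n))
    (hgrad : ∀ z, HasGradientAt f (f' z) z)
    (hLip : ∀ z w, ‖f' z - f' w‖ ≤ L * ‖z - w‖)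
    (hsc : ∀ z w, f w ≥ f z + ⟪f' z, w - z⟫ + μ / 2 * ‖w - z‖ ^ 2)
    (xstar : EuclideanSpace ℝ (Fin n)) (hmin : ∀ z, f xstar ≤ f z)
    (s : ℝ) (hs0 : 0 < s) (hs : s ≤ 1 / L)
    (x v : ℕ → EuclideanSpace ℝ (Fin n))
    (hv0 : v 0 = 0)
    (hx : ∀ k : ℕ, x (k + 1) - x k = Real.sqrt s • v (k + 1))
    (hv : ∀ k : ℕ, v (k + 1) - v k = -((2 * Real.sqrt (μ * s)) • v (k + 1))
      - Real.sqrt s • f' (x (k + 1)))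
    : ∀ k : ℕ, f (x k) - f xstar ≤ 3 * L * ‖x 0 - xstar‖ ^ 2 / (2 * (1 + Real.sqrt (μ * s) / 4) ^ k) :=
  stmt17_general μ L hμ hμL f f' hgrad hLip hsc xstar hmin s x v hv0 hx hv
end

section
/- Let f be convex with L-Lipschitz gradient on ℝⁿ, with minimizer x⋆, and let 0 < s ≤ 1/L. Then the gradient descent iterates x_{k+1} = x_k − s∇f(x_k), started from any x₀, satisfy for every k ≥ 1: f(x_k) − f(x⋆) ≤ ‖x₀ − x⋆‖² / (2ks), and for every k ≥ 0: min_{0 ≤ i ≤ k} ‖∇f(x_i)‖² ≤ 2‖x₀ − x⋆‖² / (s²(k+1)(k+2)). -/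
/-!
With `s ≤ 1 / L`, the descent lemma `f y ≤ f x + ⟪∇f x, y - x⟫ + L/2 ‖y - x‖²` gives
`f x_{k+1} ≤ f x_k - s/2 ‖∇f x_k‖²`, and the interpolation inequality
`f x + ⟪∇f x, x⋆ - x⟫ + ‖∇f x‖² / (2L) ≤ f x⋆` (from convexity plus the descent lemma) gives
`‖x_{k+1} - x⋆‖² ≤ ‖x_k - x⋆‖² - 2s (f x_k - f x⋆)`. Combining the two, the energy
`E_k = 2sk (f x_k - f x⋆) + ‖x_k - x⋆‖²` satisfies `E_{k+1} + s²(k+1) ‖∇f x_k‖² ≤ E_k`.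
Telescoping bounds both `2sk (f x_k - f x⋆)` and `s² ∑_{i ≤ k} (i+1) ‖∇f x_i‖²` by `‖x₀ - x⋆‖²`;
the smallest `‖∇f x_i‖²` is at most the weighted mean, and `∑_{i ≤ k} (i+1) = (k+1)(k+2)/2`.
-/

open scoped RealInnerProductSpace

section

open Set

variable {E : Type*} [NormedAddCommGroup E] [InnerProductSpace ℝ E] [CompleteSpace E]
  {f : E → ℝ} {f' : E → E} {L : ℝ}

theorem HasGradientAt.hasDerivAt_comp_add_smul {g x v : E} {t : ℝ}
    (h : HasGradientAt f g (x + t • v)) :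
    HasDerivAt (fun t : ℝ => f (x + t • v)) ⟪g, v⟫ t := by
  have hline : HasDerivAt (fun t : ℝ => x + t • v) v t := by
    simpa using ((hasDerivAt_id t).smul_const v).const_add x
  simpa [InnerProductSpace.toDual_apply_apply, Function.comp_def] using
    h.hasFDerivAt.comp_hasDerivAt t hline

theorem IsLocalMin.hasGradientAt_eq_zero {g x : E} (h : IsLocalMin f x)
    (hf : HasGradientAt f g x) : g = 0 := by
  simpa using h.hasFDerivAt_eq_zero hf.hasFDerivAt

theorem ConvexOn.add_inner_le_of_hasGradientAt (hf : ConvexOn ℝ univ f) {g x : E}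
    (h : HasGradientAt f g x) (y : E) : f x + ⟪g, y - x⟫ ≤ f y := by
  have hline : ConvexOn ℝ univ (fun t : ℝ => f (x + t • (y - x))) := by
    have hcomp : (fun t : ℝ => f (x + t • (y - x))) = f ∘ AffineMap.lineMap x y := by
      ext t
      simp [AffineMap.lineMap_apply_module', add_comm]
    simpa [hcomp] using hf.comp_affineMap (AffineMap.lineMap x y)
  have hd : HasDerivAt (fun t : ℝ => f (x + t • (y - x))) ⟪g, y - x⟫ 0 :=
    HasGradientAt.hasDerivAt_comp_add_smul (by simpa using h)
  have := hline.le_slope_of_hasDerivAt (mem_univ 0) (mem_univ 1) one_pos hd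
  simp only [slope_def_field, one_smul, add_sub_cancel, zero_smul, add_zero, sub_zero,
    div_one] at this
  linarith

theorem le_add_inner_add_of_lipschitz_gradient (hgrad : ∀ z, HasGradientAt f (f' z) z)
    (hLip : ∀ z w, ‖f' z - f' w‖ ≤ L * ‖z - w‖) (x y : E) :
    f y ≤ f x + ⟪f' x, y - x⟫ + L / 2 * ‖y - x‖ ^ 2 := by
  set v := y - x
  let φ : ℝ → ℝ := fun t => f (x + t • v) - t * ⟪f' x, v⟫ - L / 2 * t ^ 2 * ‖v‖ ^ 2
  have hφ : ∀ t, HasDerivAt φ (⟪f' (x + t • v) - f' x, v⟫ - L * t * ‖v‖ ^ 2) t := by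
    intro t
    have h := (((hgrad (x + t • v)).hasDerivAt_comp_add_smul (f := f)).sub
      ((hasDerivAt_id t).mul_const ⟪f' x, v⟫)).sub
        (((hasDerivAt_pow 2 t).const_mul (L / 2)).mul_const (‖v‖ ^ 2))
    refine h.congr_deriv ?_
    rw [inner_sub_left]
    ring
  obtain ⟨τ, hτ, hslope⟩ := exists_hasDerivAt_eq_slope φ _ one_pos
    (fun t _ => (hφ t).continuousAt.continuousWithinAt) (fun t _ => hφ t)
  have hτ' : ⟪f' (x + τ • v) - f' x, v⟫ ≤ L * τ * ‖v‖ ^ 2 := calc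
    _ ≤ ‖f' (x + τ • v) - f' x‖ * ‖v‖ := real_inner_le_norm _ _
    _ ≤ L * ‖τ • v‖ * ‖v‖ := by
      gcongr
      simpa using hLip (x + τ • v) x
    _ = L * τ * ‖v‖ ^ 2 := by rw [norm_smul, Real.norm_of_nonneg hτ.1.le]; ring
  have : x + v = y := by simp [v]
  simp only [one_smul, this, one_mul, one_pow, mul_one, zero_smul, add_zero, zero_mul, sub_zero,
    ne_eq, OfNat.ofNat_ne_zero, not_false_eq_true, zero_pow, mul_zero, div_one, φ] at hslope
  linarith

theorem ConvexOn.add_inner_add_sq_le_of_lipschitz_gradient (hf : ConvexOn ℝ univ f)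
    (hL : 0 < L) (hgrad : ∀ z, HasGradientAt f (f' z) z)
    (hLip : ∀ z w, ‖f' z - f' w‖ ≤ L * ‖z - w‖) (u v : E) :
    f u + ⟪f' u, v - u⟫ + 1 / (2 * L) * ‖f' u - f' v‖ ^ 2 ≤ f v := by
  set Δ := f' u - f' v
  -- `w` is a gradient step from `v` for `y ↦ f y - ⟪f' u, y⟫`, which is minimal at `u`.
  set w := v + L⁻¹ • Δ
  have hupper := le_add_inner_add_of_lipschitz_gradient hgrad hLip v w
  have hlower := hf.add_inner_le_of_hasGradientAt (hgrad u) w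
  have hwu : w - u = (v - u) + L⁻¹ • Δ := by simp only [w]; abel
  have hwv : w - v = L⁻¹ • Δ := by simp [w]
  rw [hwv, real_inner_smul_right, norm_smul, Real.norm_of_nonneg (inv_nonneg.2 hL.le)] at hupper
  rw [hwu, inner_add_right, real_inner_smul_right] at hlower
  have hΔ : ⟪f' u, Δ⟫ - ⟪f' v, Δ⟫ = ‖Δ‖ ^ 2 := by
    rw [← inner_sub_left, real_inner_self_eq_norm_sq]
  have : L / 2 * (L⁻¹ * ‖Δ‖) ^ 2 = 1 / (2 * L) * ‖Δ‖ ^ 2 := by field_simp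
  have : L⁻¹ * ⟪f' u, Δ⟫ - L⁻¹ * ⟪f' v, Δ⟫ = 2 * (1 / (2 * L) * ‖Δ‖ ^ 2) := by
    rw [← mul_sub, hΔ]; field_simp
  linarith

theorem apply_sub_smul_le_of_lipschitz_gradient (hgrad : ∀ z, HasGradientAt f (f' z) z)
    (hLip : ∀ z w, ‖f' z - f' w‖ ≤ L * ‖z - w‖) {s : ℝ} (hs : 0 ≤ s) (hsL : s * L ≤ 1) (x : E) :
    f (x - s • f' x) ≤ f x - s / 2 * ‖f' x‖ ^ 2 := by
  have h := le_add_inner_add_of_lipschitz_gradient hgrad hLip x (x - s • f' x)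
  rw [sub_sub_cancel_left, inner_neg_right, real_inner_smul_right, norm_neg, norm_smul,
    Real.norm_of_nonneg hs, real_inner_self_eq_norm_sq] at h
  nlinarith [mul_nonneg hs (sq_nonneg ‖f' x‖)]

theorem ConvexOn.norm_sub_smul_sub_sq_le (hf : ConvexOn ℝ univ f) (hL : 0 < L)
    (hgrad : ∀ z, HasGradientAt f (f' z) z) (hLip : ∀ z w, ‖f' z - f' w‖ ≤ L * ‖z - w‖)
    {xstar : E} (hstar : f' xstar = 0) {s : ℝ} (hs : 0 ≤ s) (hsL : s * L ≤ 1) (x : E) :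
    ‖x - s • f' x - xstar‖ ^ 2 ≤ ‖x - xstar‖ ^ 2 - 2 * s * (f x - f xstar) := by
  have h := hf.add_inner_add_sq_le_of_lipschitz_gradient hL hgrad hLip x xstar
  rw [hstar, sub_zero, ← neg_sub, inner_neg_right] at h
  have hexpand : ‖x - s • f' x - xstar‖ ^ 2
      = ‖x - xstar‖ ^ 2 - 2 * s * ⟪f' x, x - xstar⟫ + s ^ 2 * ‖f' x‖ ^ 2 := by
    rw [sub_right_comm, norm_sub_sq_real, real_inner_smul_right, norm_smul,
      Real.norm_of_nonneg hs, real_inner_comm]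
    ring
  have hsq : s ^ 2 * ‖f' x‖ ^ 2 ≤ 2 * s * (1 / (2 * L) * ‖f' x‖ ^ 2) := by
    rw [show 2 * s * (1 / (2 * L) * ‖f' x‖ ^ 2) = s / L * ‖f' x‖ ^ 2 by field_simp]
    gcongr
    rw [le_div_iff₀ hL]
    nlinarith
  rw [hexpand]
  linarith [mul_le_mul_of_nonneg_left h (by positivity : 0 ≤ 2 * s)]

end

section

open Finset

theorem exists_mul_le_sum_range_succ (g : ℕ → ℝ) (k : ℕ) :
    ∃ i ≤ k, g i * (((k : ℝ) + 1) * ((k : ℝ) + 2) / 2) ≤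
      ∑ j ∈ range (k + 1), ((j : ℝ) + 1) * g j := by
  have hgauss : ∑ j ∈ range (k + 1), ((j : ℝ) + 1) = ((k : ℝ) + 1) * ((k : ℝ) + 2) / 2 := by
    induction k with
    | zero => norm_num
    | succ k ih =>
      rw [sum_range_succ, ih]
      push_cast
      ring
  obtain ⟨i, hi, hmin⟩ := exists_min_image (range (k + 1)) g ⟨k, self_mem_range_succ k⟩
  refine ⟨i, Nat.lt_succ_iff.mp (mem_range.mp hi), ?_⟩
  calc g i * (((k : ℝ) + 1) * ((k : ℝ) + 2) / 2)
      = ∑ j ∈ range (k + 1), ((j : ℝ) + 1) * g i := by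
        rw [← hgauss, mul_sum]
        exact sum_congr rfl fun j _ => mul_comm _ _
    _ ≤ ∑ j ∈ range (k + 1), ((j : ℝ) + 1) * g j :=
      sum_le_sum fun j hj => mul_le_mul_of_nonneg_left (hmin j hj) (by positivity)

variable {D r g : ℕ → ℝ} {s : ℝ}

theorem two_mul_mul_add_add_sum_le (hD : ∀ k, D (k + 1) ≤ D k - s / 2 * g k)
    (hr : ∀ k, r (k + 1) ≤ r k - 2 * s * D k) (hs : 0 ≤ s) (k : ℕ) :
    2 * s * k * D k + r k + s ^ 2 * ∑ i ∈ range k, ((i : ℝ) + 1) * g i ≤ r 0 := by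
  induction k with
  | zero => simp
  | succ k ih =>
    rw [sum_range_succ]
    push_cast
    nlinarith [mul_le_mul_of_nonneg_left (hD k) (by positivity : 0 ≤ 2 * s * ((k : ℝ) + 1)),
      hr k]

theorem le_div_of_descent (hD : ∀ k, D (k + 1) ≤ D k - s / 2 * g k)
    (hr : ∀ k, r (k + 1) ≤ r k - 2 * s * D k) (hs : 0 < s) (hr0 : ∀ k, 0 ≤ r k)
    (hg0 : ∀ k, 0 ≤ g k) {k : ℕ} (hk : 1 ≤ k) :
    D k ≤ r 0 / (2 * k * s) := by
  have h := two_mul_mul_add_add_sum_le hD hr hs.le k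
  have hsum : 0 ≤ ∑ i ∈ range k, ((i : ℝ) + 1) * g i :=
    sum_nonneg fun i _ => mul_nonneg (by positivity) (hg0 i)
  have hk' : (0 : ℝ) < k := by exact_mod_cast hk
  rw [le_div_iff₀ (by positivity)]
  nlinarith [hr0 k, sq_nonneg s]

theorem exists_le_div_of_descent (hD : ∀ k, D (k + 1) ≤ D k - s / 2 * g k)
    (hr : ∀ k, r (k + 1) ≤ r k - 2 * s * D k) (hs : 0 < s) (hD0 : ∀ k, 0 ≤ D k)
    (hr0 : ∀ k, 0 ≤ r k) (k : ℕ) :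
    ∃ i ≤ k, g i ≤ 2 * r 0 / (s ^ 2 * ((k : ℝ) + 1) * ((k : ℝ) + 2)) := by
  have h := two_mul_mul_add_add_sum_le hD hr hs.le (k + 1)
  obtain ⟨i, hik, hi⟩ := exists_mul_le_sum_range_succ g k
  refine ⟨i, hik, ?_⟩
  rw [le_div_iff₀ (by positivity)]
  push_cast at h
  have hDk : 0 ≤ 2 * s * ((k : ℝ) + 1) * D (k + 1) := by have := hD0 (k + 1); positivity
  nlinarith [mul_le_mul_of_nonneg_left hi (sq_nonneg s), hr0 (k + 1)]

end

theorem stmt18_general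
    {n : ℕ} (L : ℝ)
    (f : EuclideanSpace ℝ (Fin n) → ℝ)
    (f' : EuclideanSpace ℝ (Fin n) → EuclideanSpace ℝ (Fin n))
    (hgrad : ∀ z, HasGradientAt f (f' z) z)
    (hconv : ConvexOn ℝ Set.univ f)
    (hLip : ∀ z w, ‖f' z - f' w‖ ≤ L * ‖z - w‖)
    (xstar : EuclideanSpace ℝ (Fin n)) (hmin : ∀ z, f xstar ≤ f z)
    (s : ℝ) (hs0 : 0 < s) (hs : s ≤ 1 / L)
    (x : ℕ → EuclideanSpace ℝ (Fin n))
    (hx : ∀ k : ℕ, x (k + 1) = x k - s • f' (x k))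
    : (∀ k : ℕ, 1 ≤ k → f (x k) - f xstar ≤ ‖x 0 - xstar‖ ^ 2 / (2 * k * s)) ∧
      (∀ k : ℕ, ∃ i ≤ k, ‖f' (x i)‖ ^ 2 ≤
        2 * ‖x 0 - xstar‖ ^ 2 / (s ^ 2 * ((k : ℝ) + 1) * ((k : ℝ) + 2))) := by
  have hL : 0 < L := one_div_pos.mp (hs0.trans_le hs)
  have hsL : s * L ≤ 1 := (le_div_iff₀ hL).mp hs
  have hstar : f' xstar = 0 :=
    IsLocalMin.hasGradientAt_eq_zero (Filter.Eventually.of_forall hmin) (hgrad xstar)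
  have hD : ∀ k, f (x (k + 1)) - f xstar ≤ f (x k) - f xstar - s / 2 * ‖f' (x k)‖ ^ 2 :=
    fun k => by
      rw [hx]
      linarith [apply_sub_smul_le_of_lipschitz_gradient hgrad hLip hs0.le hsL (x k)]
  have hr : ∀ k, ‖x (k + 1) - xstar‖ ^ 2 ≤ ‖x k - xstar‖ ^ 2 - 2 * s * (f (x k) - f xstar) :=
    fun k => hx k ▸ hconv.norm_sub_smul_sub_sq_le hL hgrad hLip hstar hs0.le hsL (x k)
  refine ⟨fun k hk => ?_, fun k => ?_⟩
  · exact le_div_of_descent (r := fun k => ‖x k - xstar‖ ^ 2) hD hr hs0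
      (fun _ => sq_nonneg _) (fun _ => sq_nonneg _) hk
  · exact exists_le_div_of_descent (r := fun k => ‖x k - xstar‖ ^ 2) hD hr hs0
      (fun k => sub_nonneg.2 (hmin (x k))) (fun _ => sq_nonneg _) k

theorem stmt18
    {n : ℕ} (L : ℝ) (hL : 0 < L)
    (f : EuclideanSpace ℝ (Fin n) → ℝ)
    (f' : EuclideanSpace ℝ (Fin n) → EuclideanSpace ℝ (Fin n))
    (hgrad : ∀ z, HasGradientAt f (f' z) z)
    (hconv : ConvexOn ℝ Set.univ f)
    (hLip : ∀ z w, ‖f' z - f' w‖ ≤ L * ‖z - w‖)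
    (xstar : EuclideanSpace ℝ (Fin n)) (hmin : ∀ z, f xstar ≤ f z)
    (s : ℝ) (hs0 : 0 < s) (hs : s ≤ 1 / L)
    (x : ℕ → EuclideanSpace ℝ (Fin n))
    (hx : ∀ k : ℕ, x (k + 1) = x k - s • f' (x k))
    : (∀ k : ℕ, 1 ≤ k → f (x k) - f xstar ≤ ‖x 0 - xstar‖ ^ 2 / (2 * k * s)) ∧
      (∀ k : ℕ, ∃ i ≤ k, ‖f' (x i)‖ ^ 2 ≤
        2 * ‖x 0 - xstar‖ ^ 2 / (s ^ 2 * ((k : ℝ) + 1) * ((k : ℝ) + 2))) :=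
  stmt18_general L f f' hgrad hconv hLip xstar hmin s hs0 hs x hx
end
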